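/- For all integers N ≥ 1 and k ≥ 8N, every i ∈ {1,…,N} and every integer v with 0 ≤ v ≤ k/2, in the Pólya urn model with N colours and k draws one has the tail lower bound P(X_i > v) ≥ (1/64)·exp(−2·N·v/k). -/

import Mathlib

attribute [local instance] Classical.propDecidable

/-- The set of colour-count vectors of the Pólya urn with `N` colours and `k` draws:
all `(v_1, …, v_N) ∈ ℤ_{≥0}^N` with `v_1 + ⋯ + v_N = k`.  The colour-count vector
`(X_1, …, X_N)` is uniformly distributed on this set. -/
def urnSet (N k : ℕ) : Finset (Fin N → ℕ) :=
  (Fintype.piFinset fun _ => Finset.range (k + 1)).filter fun v => ∑ i, v i = k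

lemma mem_urnSet {N n : ℕ} {x : Fin N → ℕ} : x ∈ urnSet N n ↔ ∑ i, x i = n := by
  simp only [urnSet, Finset.mem_filter, Fintype.mem_piFinset, Finset.mem_range]
  constructor
  · exact fun h => h.2
  · intro h
    refine ⟨fun i => Nat.lt_succ_of_le ?_, h⟩
    calc x i ≤ ∑ j, x j := Finset.single_le_sum (fun j _ => Nat.zero_le _) (Finset.mem_univ i)
    _ = n := h

lemma card_urnSet : ∀ N k : ℕ, (urnSet (N + 1) k).card = (k + N).choose N
  | 0, k => by
    rw [Nat.choose_zero_right]
    rw [Finset.card_eq_one]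
    refine ⟨fun _ => k, ?_⟩
    ext x
    simp only [Finset.mem_singleton, mem_urnSet, Fin.sum_univ_one]
    constructor
    · intro h; funext j; rw [show j = 0 from Fin.eq_zero j, show x 0 = k by simpa using h]
    · intro h; rw [h]; simp
  | (N + 1), k => by
    have hdecomp : urnSet (N + 2) k =
        (Finset.range (k + 1)).biUnion
          (fun j => (urnSet (N + 1) (k - j)).image (Fin.cons (α := fun _ => ℕ) j)) := by
      ext x
      simp only [Finset.mem_biUnion, Finset.mem_range, Finset.mem_image, mem_urnSet]
      constructor
      · intro hx
        refine ⟨x 0, ?_, Fin.tail x, ?_, ?_⟩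
        · have : x 0 ≤ ∑ j, x j :=
            Finset.single_le_sum (fun j _ => Nat.zero_le _) (Finset.mem_univ 0)
          omega
        · have hsum : ∑ j, x j = x 0 + ∑ j, Fin.tail x j := by
            rw [Fin.sum_univ_succ]; rfl
          have hle : x 0 ≤ ∑ j, x j :=
            Finset.single_le_sum (fun j _ => Nat.zero_le _) (Finset.mem_univ 0)
          omega
        · exact Fin.cons_self_tail x
      · rintro ⟨j, hj, y, hy, rfl⟩
        rw [Fin.sum_univ_succ]
        simp only [Fin.cons_zero, Fin.cons_succ]
        omega
    rw [hdecomp, Finset.card_biUnion, ]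
    · have : ∀ j ∈ Finset.range (k + 1),
          ((urnSet (N + 1) (k - j)).image (Fin.cons (α := fun _ => ℕ) j)).card = (k - j + N).choose N := by
        intro j _
        rw [Finset.card_image_of_injective _ (Fin.cons_right_injective (α := fun _ => ℕ) j), card_urnSet]
      rw [Finset.sum_congr rfl this]
      have h3 : ∑ j ∈ Finset.range (k + 1), (k - j + N).choose N
          = ∑ m ∈ Finset.Icc N (k + N), m.choose N := by
        apply Finset.sum_nbij' (fun j => k - j + N) (fun m => k + N - m)
        · intro a ha; simp only [Finset.mem_range] at ha; simp only [Finset.mem_Icc]; omega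
        · intro a ha; simp only [Finset.mem_Icc] at ha; simp only [Finset.mem_range]; omega
        · intro a ha; simp only [Finset.mem_range] at ha; omega
        · intro a ha; simp only [Finset.mem_Icc] at ha; omega
        · intro a _; rfl
      rw [h3, Nat.sum_Icc_choose]
      congr 1
    · intro a ha b hb hab
      simp only [Finset.disjoint_left, Finset.mem_image]
      rintro x ⟨y, _, rfl⟩ ⟨z, _, hz⟩
      apply hab
      have := congrFun hz 0
      simpa using this.symm

lemma card_filter_urn (N k v : ℕ) (i : Fin N) (h : v + 1 ≤ k) :
    ((urnSet N k).filter fun x => v < x i).card = (urnSet N (k - (v + 1))).card := by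
  apply Finset.card_nbij' (fun x => Function.update x i (x i - (v + 1)))
    (fun y => Function.update y i (y i + (v + 1)))
  · intro x hx
    simp only [Finset.mem_coe, Finset.mem_filter, mem_urnSet] at hx
    rw [Finset.mem_coe, mem_urnSet, Finset.sum_update_of_mem (Finset.mem_univ i)]
    have h1 : ∑ j ∈ Finset.univ \ {i}, x j + x i = k := by
      rw [← Finset.erase_eq, Finset.sum_erase_add _ _ (Finset.mem_univ i)]
      exact hx.1
    omega
  · intro y hy
    rw [Finset.mem_coe, mem_urnSet] at hy
    simp only [Finset.mem_coe, Finset.mem_filter, mem_urnSet]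
    have h1 : ∑ j ∈ Finset.univ \ {i}, y j + y i = k - (v + 1) := by
      rw [← Finset.erase_eq, Finset.sum_erase_add _ _ (Finset.mem_univ i)]
      exact hy
    constructor
    · rw [Finset.sum_update_of_mem (Finset.mem_univ i)]
      omega
    · simp only [Function.update_self]
      omega
  · intro x hx
    simp only [Finset.mem_coe, Finset.mem_filter] at hx
    funext j
    by_cases hj : j = i
    · subst hj; simp only [Function.update_self, Function.update_apply, if_pos rfl]; omega
    · simp [Function.update_of_ne hj]
  · intro y _
    funext j
    by_cases hj : j = i
    · subst hj; simp [Function.update_self]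
    · simp [Function.update_of_ne hj]

lemma choose_ratio_nat {m k : ℕ} (h : m ≤ k) : ∀ n : ℕ,
    (k + n).choose n * m ^ n ≤ (m + n).choose n * k ^ n
  | 0 => by simp
  | (n + 1) => by
    have ih := choose_ratio_nat h n
    refine Nat.le_of_mul_le_mul_left ?_ (Nat.succ_pos n)
    have key : ∀ a : ℕ, (n + 1) * ((a + (n + 1)).choose (n + 1) * a ^ (n + 1))
        = ((a + n + 1) * a) * ((a + n).choose n * a ^ n) := by
      intro a
      have hc := Nat.add_one_mul_choose_eq (a + n) n
      calc (n + 1) * ((a + (n + 1)).choose (n + 1) * a ^ (n + 1))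
          = ((a + n + 1).choose (n + 1) * (n + 1)) * (a ^ n * a) := by
            rw [show a + (n + 1) = a + n + 1 from rfl, pow_succ]; ring
        _ = ((a + n + 1) * (a + n).choose n) * (a ^ n * a) := by rw [← hc]
        _ = ((a + n + 1) * a) * ((a + n).choose n * a ^ n) := by ring
    have key2 : ∀ a b : ℕ, (n + 1) * ((a + (n + 1)).choose (n + 1) * b ^ (n + 1))
        = ((a + n + 1) * b) * ((a + n).choose n * b ^ n) := by
      intro a b
      have hc := Nat.add_one_mul_choose_eq (a + n) n
      calc (n + 1) * ((a + (n + 1)).choose (n + 1) * b ^ (n + 1))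
          = ((a + n + 1).choose (n + 1) * (n + 1)) * (b ^ n * b) := by
            rw [show a + (n + 1) = a + n + 1 from rfl, pow_succ]; ring
        _ = ((a + n + 1) * (a + n).choose n) * (b ^ n * b) := by rw [← hc]
        _ = ((a + n + 1) * b) * ((a + n).choose n * b ^ n) := by ring
    have e1 := key2 k m
    have e2 := key2 m k
    rw [e1, e2]
    exact Nat.mul_le_mul (by nlinarith) ih

lemma exp_neg_two_le {y : ℝ} (h0 : 0 ≤ y) (h1 : y ≤ 5 / 8) : Real.exp (-(2 * y)) ≤ 1 - y := by
  have hb : (1 + 2 * y / 3) ^ 3 ≤ Real.exp (2 * y) := by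
    have h2 : 1 + 2 * y / 3 ≤ Real.exp (2 * y / 3) := by
      have := Real.add_one_le_exp (2 * y / 3); linarith
    calc (1 + 2 * y / 3) ^ 3 ≤ Real.exp (2 * y / 3) ^ 3 := by
          apply pow_le_pow_left₀ (by linarith) h2
      _ = Real.exp ((3 : ℕ) * (2 * y / 3)) := (Real.exp_nat_mul _ 3).symm
      _ = Real.exp (2 * y) := by push_cast; ring_nf
  have hpos : (0:ℝ) < (1 + 2 * y / 3) ^ 3 := by positivity
  have key : (1:ℝ) ≤ (1 - y) * (1 + 2 * y / 3) ^ 3 := by nlinarith [sq_nonneg y, mul_nonneg h0 h0, mul_nonneg (mul_nonneg h0 h0) h0]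
  rw [Real.exp_neg]
  calc (Real.exp (2 * y))⁻¹ ≤ ((1 + 2 * y / 3) ^ 3)⁻¹ := by
        apply inv_anti₀ hpos hb
    _ ≤ 1 - y := by
        rw [← one_div, div_le_iff₀ hpos]
        linarith [key]

/-- The probability, in the Pólya urn model with `N` colours and `k` draws, that the
colour-count vector `(X_1, …, X_N)` satisfies the predicate `p`, expressed as a
counting ratio over the uniform distribution on `urnSet N k`. -/
noncomputable def urnProb (N k : ℕ) (p : (Fin N → ℕ) → Prop) : ℝ :=
  ((urnSet N k).filter p).card / (urnSet N k).card

theorem polya_strict_upper_tail_lower_bound (N k : ℕ) (hN : 1 ≤ N) (hk : 8 * N ≤ k)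
    (i : Fin N) (v : ℕ) (hv : (v : ℝ) ≤ (k : ℝ) / 2) :
    1 / 64 * Real.exp (-(2 * (N : ℝ) * v) / k) ≤ urnProb N k (fun x => v < x i) := by
  obtain ⟨n, rfl⟩ : ∃ n, N = n + 1 := ⟨N - 1, by omega⟩
  have hk8 : 8 ≤ k := by omega
  have hkpos : (0:ℝ) < k := by exact_mod_cast Nat.pos_of_ne_zero (by omega)
  have hvk : v + 1 ≤ k := by
    have h2v : ((2 * v : ℕ) : ℝ) ≤ (k : ℝ) := by push_cast; linarith
    have : 2 * v ≤ k := by exact_mod_cast h2v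
    omega
  set m := k - (v + 1) with hm
  have hmk : m ≤ k := by omega
  have hcard : (urnSet (n + 1) k).card = (k + n).choose n := card_urnSet n k
  have hcard2 : ((urnSet (n + 1) k).filter fun x => v < x i).card = (m + n).choose n := by
    rw [card_filter_urn _ _ _ _ hvk, card_urnSet]
  have hcpos : 0 < (k + n).choose n := Nat.choose_pos (Nat.le_add_left n k)
  have hprob : urnProb (n + 1) k (fun x => v < x i)
      = ((m + n).choose n : ℝ) / ((k + n).choose n) := by
    unfold urnProb
    rw [hcard]
    congr 2
    rw [← hcard2]
    congr 1
    apply Finset.filter_congr_decidable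
  have hkpow : (0:ℝ) < (k:ℝ) ^ n := by positivity
  have hrat : ((m:ℝ) / k) ^ n ≤ ((m + n).choose n : ℝ) / ((k + n).choose n) := by
    rw [div_pow, div_le_div_iff₀ hkpow (by exact_mod_cast hcpos)]
    calc (m:ℝ) ^ n * ((k + n).choose n) = (((k + n).choose n * m ^ n : ℕ) : ℝ) := by
          push_cast; ring
      _ ≤ (((m + n).choose n * k ^ n : ℕ) : ℝ) := by exact_mod_cast choose_ratio_nat hmk n
      _ = ((m + n).choose n : ℝ) * (k:ℝ) ^ n := by push_cast; ring
  set y : ℝ := ((v:ℝ) + 1) / k with hy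
  have hy0 : 0 ≤ y := by positivity
  have hy58 : y ≤ 5 / 8 := by
    rw [hy, div_le_iff₀ hkpos]
    have hk8r : (8:ℝ) ≤ (k:ℝ) := by exact_mod_cast hk8
    linarith
  have hmr : (m:ℝ) = (k:ℝ) - ((v:ℝ) + 1) := by
    rw [hm]; push_cast [Nat.cast_sub hvk]; ring
  have hexp : Real.exp (-(2 * y)) ≤ (m:ℝ) / k := by
    have h1 := exp_neg_two_le hy0 hy58
    have h2 : 1 - y = (m:ℝ) / k := by
      rw [hmr, hy, eq_div_iff hkpos.ne']
      field_simp
    linarith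
  have hpow : Real.exp (-(2 * y)) ^ n ≤ ((m:ℝ) / k) ^ n :=
    pow_le_pow_left₀ (Real.exp_pos _).le hexp n
  have hexpn : Real.exp (-(2 * y)) ^ n = Real.exp ((n:ℝ) * (-(2 * y))) :=
    (Real.exp_nat_mul _ n).symm
  have hfin : 1 / 64 * Real.exp (-(2 * ((n:ℝ) + 1) * v) / k)
      ≤ Real.exp ((n:ℝ) * (-(2 * y))) := by
    have hsplit : (n:ℝ) * (-(2 * y)) = -(2 * ((n:ℝ) + 1) * v) / k + 2 * ((v:ℝ) - n) / k := by
      rw [hy]; field_simp; ring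
    rw [hsplit, Real.exp_add]
    have h64 : (1:ℝ) / 64 ≤ Real.exp (2 * ((v:ℝ) - n) / k) := by
      have hge : -(1/4 : ℝ) ≤ 2 * ((v:ℝ) - n) / k := by
        rw [le_div_iff₀ hkpos]
        have hkn : (8:ℝ) * ((n:ℝ) + 1) ≤ k := by exact_mod_cast hk
        have hv0 : (0:ℝ) ≤ (v:ℝ) := Nat.cast_nonneg v
        nlinarith
      calc (1:ℝ) / 64 ≤ 3 / 4 := by norm_num
        _ ≤ Real.exp (-(1/4)) := by
            have := Real.add_one_le_exp (-(1/4 : ℝ)); linarith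
        _ ≤ _ := Real.exp_le_exp.mpr hge
    calc 1 / 64 * Real.exp (-(2 * ((n:ℝ) + 1) * v) / k)
        = Real.exp (-(2 * ((n:ℝ) + 1) * v) / k) * (1 / 64) := by ring
      _ ≤ Real.exp (-(2 * ((n:ℝ) + 1) * v) / k) * Real.exp (2 * ((v:ℝ) - n) / k) :=
          mul_le_mul_of_nonneg_left h64 (Real.exp_pos _).le
  rw [hprob]
  push_cast
  calc 1 / 64 * Real.exp (-(2 * ((n:ℝ) + 1) * v) / k)
      ≤ Real.exp ((n:ℝ) * (-(2 * y))) := hfin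
    _ = Real.exp (-(2 * y)) ^ n := hexpn.symm
    _ ≤ ((m:ℝ) / k) ^ n := hpow
    _ ≤ ((m + n).choose n : ℝ) / ((k + n).choose n) := hrat
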